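/- arXiv:2506.13347 — 2 statements merged into one kernel-verified Lean document; each statement's English description precedes it below -/
import Mathlib

section
/- Let f : [0,∞) → ℝ be continuously differentiable with f(t)/t → ω as t → ∞ and sup_{s≥1}|f'(s)| < ∞. Then for every integer k ≥ 1, lim_{t→∞} (1/t^{k+1}) ∫₁ᵗ s^k f'(s) ds = ω/(k+1). -/
/-! Integrating by parts,
`∫₁ᵗ s^k f'(s) ds = t^k f(t) - f(1) - k ∫₁ᵗ s^(k-1) f(s) ds`.
The boundary term is `ω t^(k+1) + o(t^(k+1))`. Since `k s^(k-1) f(s) = k ω s^k + o(s^k)` and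
`o`-estimates survive integration against a weight whose integral diverges (an integral form of
the Stolz–Cesàro theorem), the last integral is `k ω t^(k+1)/(k+1) + o(t^(k+1))`. -/

open Filter Asymptotics Topology intervalIntegral MeasureTheory

theorem Asymptotics.IsLittleO.intervalIntegral_atTop {E : Type*} [NormedAddCommGroup E]
    [NormedSpace ℝ E] {e : ℝ → E} {g : ℝ → ℝ} {a : ℝ}
    (he : ∀ b, IntervalIntegrable e volume a b) (hg : ∀ b, IntervalIntegrable g volume a b)
    (hg_nonneg : ∀ᶠ s in atTop, 0 ≤ g s)
    (hG : Tendsto (fun t => ∫ s in a..t, g s) atTop atTop) (h : e =o[atTop] g) :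
    (fun t => ∫ s in a..t, e s) =o[atTop] fun t => ∫ s in a..t, g s := by
  refine isLittleO_iff.2 fun ε hε => ?_
  have hε2 : 0 < ε / 2 := half_pos hε
  obtain ⟨T, hT⟩ := eventually_atTop.1
    ((h.bound hε2).and (hg_nonneg.and (eventually_ge_atTop a)))
  -- Past `T` the integrand is dominated by `ε/2 • g`; the part before `T` is a constant,
  -- which `∫ₐᵗ g → ∞` eventually absorbs.
  set C := ‖∫ s in a..T, e s‖ + ε / 2 * |∫ s in a..T, g s|
  filter_upwards [hG.eventually_ge_atTop (C / (ε / 2)), eventually_ge_atTop T]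
    with t hCt hTt
  have htail : ‖∫ s in T..t, e s‖ ≤ ε / 2 * ∫ s in T..t, g s := by
    rw [← intervalIntegral.integral_const_mul]
    refine norm_integral_le_of_norm_le hTt (ae_of_all _ fun s hs => ?_)
      (((hg T).symm.trans (hg t)).const_mul _)
    obtain ⟨hes, hgs, -⟩ := hT s hs.1.le
    rwa [Real.norm_of_nonneg hgs] at hes
  have hsplit : ∫ s in a..t, e s = (∫ s in a..T, e s) + ∫ s in T..t, e s :=
    (integral_add_adjacent_intervals (he T) ((he T).symm.trans (he t))).symm
  have hsplit_g : ∫ s in T..t, g s = (∫ s in a..t, g s) - ∫ s in a..T, g s :=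
    (integral_interval_sub_left (hg t) (hg T)).symm
  have hC : C ≤ ε / 2 * ∫ s in a..t, g s := by
    rwa [div_le_iff₀ hε2, mul_comm] at hCt
  calc ‖∫ s in a..t, e s‖
      ≤ ‖∫ s in a..T, e s‖ + ε / 2 * ((∫ s in a..t, g s) - ∫ s in a..T, g s) := by
        rw [hsplit, ← hsplit_g]; exact (norm_add_le _ _).trans (by gcongr)
    _ ≤ C + ε / 2 * ∫ s in a..t, g s := by
        have := mul_le_mul_of_nonneg_left (neg_le_abs (∫ s in a..T, g s)) hε2.le
        simp only [C]
        linarith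
    _ ≤ ε * ‖∫ s in a..t, g s‖ := by
        have := Real.le_norm_self (∫ s in a..t, g s)
        nlinarith

theorem Filter.Tendsto.intervalIntegral_div_intervalIntegral_atTop {h g : ℝ → ℝ} {a c : ℝ}
    (hlim : Tendsto (fun s => h s / g s) atTop (𝓝 c))
    (hh : ∀ b, IntervalIntegrable h volume a b) (hg : ∀ b, IntervalIntegrable g volume a b)
    (hg_pos : ∀ᶠ s in atTop, 0 < g s)
    (hG : Tendsto (fun t => ∫ s in a..t, g s) atTop atTop) :
    Tendsto (fun t => (∫ s in a..t, h s) / ∫ s in a..t, g s) atTop (𝓝 c) := by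
  have hsmall : (fun s => h s - c * g s) =o[atTop] g := by
    refine (isLittleO_iff_tendsto' (hg_pos.mono fun s hs h0 => absurd h0 hs.ne')).2 ?_
    have hlim0 : Tendsto (fun s => h s / g s - c) atTop (𝓝 0) := by
      simpa using hlim.sub_const c
    refine hlim0.congr' ?_
    filter_upwards [hg_pos] with s hs
    field_simp
  have hint := (hsmall.intervalIntegral_atTop (fun b => (hh b).sub ((hg b).const_mul c)) hg
    (hg_pos.mono fun _ => le_of_lt) hG).tendsto_div_nhds_zero
  refine (zero_add c ▸ hint.add_const c).congr' ?_
  filter_upwards [hG.eventually_gt_atTop 0] with t ht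
  rw [integral_sub (hh t) ((hg t).const_mul c), intervalIntegral.integral_const_mul]
  field_simp
  ring

theorem tendsto_integral_pow_atTop (a : ℝ) (k : ℕ) :
    Tendsto (fun t => ∫ s in a..t, s ^ k) atTop atTop := by
  simp_rw [integral_pow, sub_eq_add_neg]
  exact (tendsto_atTop_add_const_right _ _ (tendsto_pow_atTop k.succ_ne_zero)).atTop_div_const
    (by positivity)

theorem tendsto_integral_pow_div_pow (a : ℝ) (k : ℕ) :
    Tendsto (fun t => (∫ s in a..t, s ^ k) / t ^ (k + 1)) atTop (𝓝 (1 / (k + 1))) := by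
  have hinv : Tendsto (fun t : ℝ => (t ^ (k + 1))⁻¹) atTop (𝓝 0) :=
    tendsto_inv_atTop_zero.comp (tendsto_pow_atTop k.succ_ne_zero)
  have hlim := ((tendsto_const_nhds (x := (1 : ℝ))).sub (hinv.const_mul (a ^ (k + 1)))).div_const
    ((k : ℝ) + 1)
  rw [mul_zero, sub_zero] at hlim
  refine hlim.congr' ?_
  filter_upwards [eventually_gt_atTop 0] with t ht
  rw [integral_pow]
  field_simp

theorem Filter.Tendsto.intervalIntegral_div_pow_atTop {g : ℝ → ℝ} {a c : ℝ} {k : ℕ}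
    (hg : ∀ b, IntervalIntegrable g volume a b)
    (hlim : Tendsto (fun s => g s / s ^ k) atTop (𝓝 c)) :
    Tendsto (fun t => (∫ s in a..t, g s) / t ^ (k + 1)) atTop (𝓝 (c / (k + 1))) := by
  have hpow := tendsto_integral_pow_atTop a k
  have hlim' := (hlim.intervalIntegral_div_intervalIntegral_atTop hg
    (fun _ => intervalIntegrable_pow k) ((eventually_gt_atTop 0).mono fun _ hs => pow_pos hs k)
    hpow).mul (tendsto_integral_pow_div_pow a k)
  rw [mul_one_div] at hlim'
  refine hlim'.congr' ?_
  filter_upwards [hpow.eventually_ne_atTop 0] with t ht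
  exact div_mul_div_cancel₀ ht

theorem integral_pow_mul_deriv_eq {f f' : ℝ → ℝ} {a b : ℝ}
    (hf : ∀ x ∈ Set.uIcc a b, HasDerivAt f (f' x) x) (hf' : IntervalIntegrable f' volume a b)
    (k : ℕ) :
    ∫ s in a..b, s ^ k * f' s =
      b ^ k * f b - a ^ k * f a - ∫ s in a..b, k * s ^ (k - 1) * f s :=
  integral_mul_deriv_eq_deriv_mul (fun x _ => hasDerivAt_pow k x) hf
    ((continuous_const.mul (continuous_pow _)).intervalIntegrable _ _) hf'

theorem power_weighted_derivative_integral_asymptotics_general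
    (f : ℝ → ℝ) (hf : ContDiff ℝ 1 f) (ω : ℝ)
    (hasymp : Tendsto (fun t => f t / t) atTop (nhds ω)) :
    ∀ k : ℕ, 1 ≤ k →
      Tendsto (fun t => (1 / t ^ (k + 1)) * ∫ s in (1:ℝ)..t, s ^ k * deriv f s)
        atTop (nhds (ω / (k + 1))) := by
  intro k hk
  have hfd : Differentiable ℝ f := hf.differentiable one_ne_zero
  have hrest : Tendsto (fun t => (∫ s in (1:ℝ)..t, k * s ^ (k - 1) * f s) / t ^ (k + 1)) atTop
      (𝓝 (k * ω / (k + 1))) := by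
    have hcont : Continuous fun s : ℝ => k * s ^ (k - 1) * f s := by fun_prop
    refine Tendsto.intervalIntegral_div_pow_atTop (fun _ => hcont.intervalIntegrable _ _)
      ((hasymp.const_mul (k : ℝ)).congr' ?_)
    filter_upwards [eventually_gt_atTop 0] with s hs
    rw [← pow_sub_mul_pow s hk, pow_one]
    field_simp
  have hboundary : Tendsto (fun t => t ^ k * f t / t ^ (k + 1)) atTop (𝓝 ω) := by
    refine hasymp.congr' ?_
    filter_upwards [eventually_gt_atTop 0] with t ht
    field_simp
    ring
  have hinit : Tendsto (fun t : ℝ => 1 ^ k * f 1 / t ^ (k + 1)) atTop (𝓝 0) :=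
    tendsto_const_nhds.div_atTop (tendsto_pow_atTop k.succ_ne_zero)
  convert (hboundary.sub hinit).sub hrest using 1
  · ext t
    rw [integral_pow_mul_deriv_eq (fun x _ => (hfd x).hasDerivAt)
      ((hf.continuous_deriv le_rfl).intervalIntegrable _ _)]
    ring
  · congr 1
    field_simp
    ring

/-- If `f(t)/t → ω` and `f'` is bounded on `[1,∞)`, then for every `k ≥ 1`,
`(1/t^{k+1}) ∫₁ᵗ s^k f'(s) ds → ω/(k+1)`. -/
theorem power_weighted_derivative_integral_asymptotics
    (f : ℝ → ℝ) (hf : ContDiff ℝ 1 f) (ω : ℝ)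
    (hasymp : Tendsto (fun t => f t / t) atTop (nhds ω))
    (hbdd : ∃ M, ∀ s ≥ (1:ℝ), |deriv f s| ≤ M) :
    ∀ k : ℕ, 1 ≤ k →
      Tendsto (fun t => (1 / t ^ (k + 1)) * ∫ s in (1:ℝ)..t, s ^ k * deriv f s)
        atTop (nhds (ω / (k + 1))) :=
  power_weighted_derivative_integral_asymptotics_general f hf ω hasymp
end

section
/- Let φ_i : [0,∞) → ℝ, i = 1,…,k, be C¹ functions with bounded derivatives on [1,∞) and φ_i(t)/t → ω_i as t → ∞. Define m_k(t) = ∫_{Δ_k(t)} φ₁'(t₁) ⋯ φ_k'(t_k) dt₁⋯dt_k over the simplex Δ_k(t) = {0 ≤ t₁ ≤ ⋯ ≤ t_k ≤ t}. Then lim_{t→∞} m_k(t)/t^k = (ω₁ ⋯ ω_k)/k!. -/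
/-!
Splitting off the last coordinate of the simplex (Fubini) gives
`m_{k+1}(t) = ∫₀ᵗ φ'_{k+1}(s) m_k(s) ds`, so one argues by induction on `k`, writing
`m_k(s) = c s^k + e(s)` with `c = (ω₁⋯ω_k)/k!` and `e(s)/s^k → 0`. Integration by parts gives
`∫₀ᵗ φ'(s) s^k ds = t^k φ(t) - k ∫₀ᵗ s^(k-1) φ(s) ds ~ ω t^(k+1)/(k+1)`, and since `φ'` is bounded,
`|∫₀ᵗ φ' e| ≤ M ∫₀ᵗ |e| = o(t^(k+1))`. Both estimates rest on the fact that a continuous `F` with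
`F(s)/s^n → L` satisfies `(∫₀ᵗ F)/t^(n+1) → L/(n+1)`, which follows by rescaling `s = t u` and
dominated convergence on `[0, 1]`.
-/

open Filter MeasureTheory Set Topology

lemma Continuous.exists_abs_le_Ici_of_exists_abs_le_Ici {f : ℝ → ℝ} (hf : Continuous f)
    {a : ℝ} (h : ∃ M, ∀ s ≥ a, |f s| ≤ M) (b : ℝ) : ∃ M, ∀ s ≥ b, |f s| ≤ M := by
  obtain ⟨M, hM⟩ := h
  obtain ⟨K, hK⟩ := isCompact_Icc.exists_bound_of_continuousOn (hf.continuousOn (s := Icc b a))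
  refine ⟨max K M, fun s hs => ?_⟩
  rcases le_total s a with hsa | has
  · exact (hK s ⟨hs, hsa⟩).trans (le_max_left _ _)
  · exact (hM s has).trans (le_max_right _ _)

lemma continuousOn_primitive_Ici {f : ℝ → ℝ} {a : ℝ} (hf : ContinuousOn f (Ici a)) :
    ContinuousOn (fun t => ∫ s in a..t, f s) (Ici a) := by
  intro x hx
  have hIcc : Icc a (x + 1) ∈ 𝓝[Ici a] x := by
    rw [← Ici_inter_Iic]
    exact inter_mem_nhdsWithin _ (Iic_mem_nhds (lt_add_one x))
  have hax : a ≤ x + 1 := by linarith [mem_Ici.1 hx]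
  have h := intervalIntegral.continuousOn_primitive_interval (μ := volume) (a := a) (b := x + 1)
    (by rw [uIcc_of_le hax]; exact (hf.mono Icc_subset_Ici_self).integrableOn_Icc)
  rw [uIcc_of_le hax] at h
  exact (h x ⟨hx, (lt_add_one x).le⟩).mono_of_mem_nhdsWithin hIcc

section

variable {F : ℝ → ℝ} {n : ℕ} {L : ℝ}

lemma exists_abs_le_mul_one_add_pow (hF : ContinuousOn F (Ici 0))
    (hFL : Tendsto (fun s => F s / s ^ n) atTop (𝓝 L)) :
    ∃ C, ∀ s, 0 ≤ s → |F s| ≤ C * (1 + s) ^ n := by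
  obtain ⟨T, hT⟩ := eventually_atTop.1
    ((hFL.abs.eventually (gt_mem_nhds (lt_add_one |L|))).and (eventually_gt_atTop 0))
  obtain ⟨K, hK⟩ := isCompact_Icc.exists_bound_of_continuousOn
    (hF.mono (Icc_subset_Ici_self : Icc 0 T ⊆ Ici 0))
  have hC : 0 ≤ max K (|L| + 1) := le_max_of_le_right (by positivity)
  refine ⟨max K (|L| + 1), fun s hs => ?_⟩
  rcases le_total s T with hsT | hTs
  · calc |F s| ≤ K := hK s ⟨hs, hsT⟩
      _ ≤ max K (|L| + 1) := le_max_left _ _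
      _ ≤ max K (|L| + 1) * (1 + s) ^ n :=
        le_mul_of_one_le_right hC (one_le_pow₀ (by linarith))
  · obtain ⟨hlt, hpos⟩ := hT s hTs
    rw [abs_div, abs_of_pos (pow_pos hpos n), div_lt_iff₀ (pow_pos hpos n)] at hlt
    calc |F s| ≤ (|L| + 1) * s ^ n := hlt.le
      _ ≤ max K (|L| + 1) * (1 + s) ^ n :=
        mul_le_mul (le_max_right _ _) (pow_le_pow_left₀ hs (by linarith) n) (by positivity) hC

lemma integral_div_pow_succ_eq_integral_comp_mul {t : ℝ} (ht : 0 < t) :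
    (∫ s in 0..t, F s) / t ^ (n + 1) = ∫ u in (0:ℝ)..1, F (t * u) / t ^ n := by
  rw [intervalIntegral.integral_div, intervalIntegral.integral_comp_mul_left F ht.ne', mul_zero,
    mul_one, smul_eq_mul, pow_succ]
  field_simp

lemma tendsto_integral_div_pow_succ (hF : ContinuousOn F (Ici 0))
    (hFL : Tendsto (fun s => F s / s ^ n) atTop (𝓝 L)) :
    Tendsto (fun t => (∫ s in 0..t, F s) / t ^ (n + 1)) atTop (𝓝 (L / (n + 1))) := by
  obtain ⟨C, hC⟩ := exists_abs_le_mul_one_add_pow hF hFL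
  have hC0 : 0 ≤ C := by simpa using (abs_nonneg _).trans (hC 0 le_rfl)
  have hlim : ∫ u in (0:ℝ)..1, L * u ^ n = L / (n + 1) := by
    simp only [intervalIntegral.integral_const_mul, integral_pow, one_pow, zero_pow n.succ_ne_zero,
      sub_zero]
    ring
  rw [← hlim]
  refine (intervalIntegral.tendsto_integral_filter_of_dominated_convergence
    (F := fun t u => F (t * u) / t ^ n) (fun _ => C * 2 ^ n)
    ?_ ?_ intervalIntegrable_const ?_).congr' ?_
  · filter_upwards [eventually_gt_atTop 0] with t ht
    rw [uIoc_of_le zero_le_one]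
    refine ContinuousOn.aestronglyMeasurable ?_ measurableSet_Ioc
    refine (hF.comp (continuousOn_const.mul continuousOn_id) fun u hu => ?_).div_const _
    exact mul_nonneg ht.le hu.1.le
  · filter_upwards [eventually_ge_atTop 1] with t ht
    refine ae_of_all _ fun u hu => ?_
    rw [uIoc_of_le zero_le_one] at hu
    have ht0 : 0 < t := one_pos.trans_le ht
    rw [Real.norm_eq_abs, abs_div, abs_of_pos (pow_pos ht0 n), div_le_iff₀ (pow_pos ht0 n)]
    calc |F (t * u)| ≤ C * (1 + t * u) ^ n := hC _ (mul_nonneg ht0.le hu.1.le)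
      _ ≤ C * (2 * t) ^ n := by gcongr <;> nlinarith [hu.1, hu.2]
      _ = C * 2 ^ n * t ^ n := by ring
  · refine ae_of_all _ fun u hu => ?_
    rw [uIoc_of_le zero_le_one] at hu
    refine ((hFL.comp (tendsto_id.atTop_mul_const hu.1)).mul_const (u ^ n)).congr' ?_
    filter_upwards [eventually_gt_atTop 0] with t ht
    have : u ≠ 0 := hu.1.ne'
    simp only [Function.comp_apply, id, mul_pow]
    field_simp
  · filter_upwards [eventually_gt_atTop 0] with t ht
    exact (integral_div_pow_succ_eq_integral_comp_mul ht).symm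

end

section

variable {k : ℕ}

def orderedSimplex (k : ℕ) (t : ℝ) : Set (Fin k → ℝ) :=
  {p | (∀ i, 0 ≤ p i ∧ p i ≤ t) ∧ ∀ i j : Fin k, i ≤ j → p i ≤ p j}

lemma isClosed_orderedSimplex (t : ℝ) : IsClosed (orderedSimplex k t) := by
  simp only [orderedSimplex, ofPred_and, ofPred_forall]
  exact (isClosed_iInter fun i => (isClosed_le continuous_const (continuous_apply i)).inter
      (isClosed_le (continuous_apply i) continuous_const)).inter
    (isClosed_iInter fun i => isClosed_iInter fun j => isClosed_iInter fun _ =>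
      isClosed_le (continuous_apply i) (continuous_apply j))

lemma isCompact_orderedSimplex (t : ℝ) : IsCompact (orderedSimplex k t) :=
  (isCompact_univ_pi fun _ => isCompact_Icc).of_isClosed_subset (isClosed_orderedSimplex t)
    fun _ hp => mem_univ_pi.2 fun i => hp.1 i

lemma snoc_mem_orderedSimplex_iff {q : Fin k → ℝ} {s t : ℝ} :
    Fin.snoc q s ∈ orderedSimplex (k + 1) t ↔ s ∈ Icc 0 t ∧ q ∈ orderedSimplex k s := by
  simp only [orderedSimplex, mem_ofPred_eq, Fin.forall_fin_succ', Fin.snoc_castSucc,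
    Fin.snoc_last, Fin.castSucc_le_castSucc_iff, Fin.le_last, forall_const, mem_Icc,
    Fin.last_le_iff, Fin.castSucc_ne_last, false_imp_iff, implies_true, le_refl, and_true]
  grind

lemma integral_eq_integral_integral_snoc {f : (Fin (k + 1) → ℝ) → ℝ} (hf : Integrable f) :
    ∫ p, f p = ∫ s, ∫ q, f (Fin.snoc q s) := by
  set e := MeasurableEquiv.piFinSuccAbove (fun _ : Fin (k + 1) => ℝ) (Fin.last k)
  have hmp : MeasurePreserving e.symm := (volume_preserving_piFinSuccAbove _ _).symm
  rw [← hmp.integral_comp', Measure.volume_eq_prod,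
    integral_prod (fun z => f (e.symm z)) ((hmp.integrable_comp_emb
    (MeasurableEquiv.measurableEmbedding _)).2 hf)]
  simp only [e, MeasurableEquiv.piFinSuccAbove_symm_apply, Fin.insertNthEquiv_last]
  rfl

/-- With `D i = φ_i'` this is the paper's `m_k(t)`. -/
noncomputable def simplexIntegral (D : Fin k → ℝ → ℝ) (t : ℝ) : ℝ :=
  ∫ p in orderedSimplex k t, ∏ i, D i (p i)

lemma simplexIntegral_zero (D : Fin 0 → ℝ → ℝ) (t : ℝ) : simplexIntegral D t = 1 := by
  simp [simplexIntegral, orderedSimplex, Measure.volume_pi_eq_dirac (0 : Fin 0 → ℝ)]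

lemma indicator_orderedSimplex_snoc (D : Fin (k + 1) → ℝ → ℝ) (q : Fin k → ℝ) (s t : ℝ) :
    (orderedSimplex (k + 1) t).indicator (fun p => ∏ i, D i (p i)) (Fin.snoc q s) =
      (Icc 0 t).indicator (D (Fin.last k)) s *
        (orderedSimplex k s).indicator (fun q => ∏ j, D j.castSucc (q j)) q := by
  classical
  simp only [indicator_apply]
  simp only [snoc_mem_orderedSimplex_iff, Fin.prod_univ_castSucc, Fin.snoc_castSucc, Fin.snoc_last]
  split_ifs <;> simp_all [mul_comm]

lemma integrableOn_orderedSimplex {D : Fin k → ℝ → ℝ} (hD : ∀ i, Continuous (D i)) (t : ℝ) :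
    IntegrableOn (fun p : Fin k → ℝ => ∏ i, D i (p i)) (orderedSimplex k t) :=
  (continuous_finsetProd _ fun i _ => (hD i).comp (continuous_apply i)).continuousOn
    |>.integrableOn_compact (isCompact_orderedSimplex t)

lemma simplexIntegral_succ {D : Fin (k + 1) → ℝ → ℝ} (hD : ∀ i, Continuous (D i)) {t : ℝ}
    (ht : 0 ≤ t) :
    simplexIntegral D t =
      ∫ s in 0..t, D (Fin.last k) s * simplexIntegral (fun j => D j.castSucc) s := by
  have hmeas := (isClosed_orderedSimplex (k := k + 1) t).measurableSet
  rw [simplexIntegral, ← integral_indicator hmeas,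
    integral_eq_integral_integral_snoc
      ((integrableOn_orderedSimplex hD t).integrable_indicator hmeas),
    intervalIntegral.integral_of_le ht, ← integral_Icc_eq_integral_Ioc,
    ← integral_indicator measurableSet_Icc]
  congr 1 with s
  simp only [indicator_orderedSimplex_snoc, integral_const_mul, indicator_mul_left,
    integral_indicator (isClosed_orderedSimplex s).measurableSet, simplexIntegral]

lemma continuousOn_simplexIntegral {D : Fin k → ℝ → ℝ} (hD : ∀ i, Continuous (D i)) :
    ContinuousOn (simplexIntegral D) (Ici 0) := by
  induction k with
  | zero => simpa only [funext (simplexIntegral_zero D)] using continuousOn_const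
  | succ k ih =>
    exact (continuousOn_primitive_Ici ((hD _).continuousOn.mul (ih fun j => hD _))).congr
      fun t ht => simplexIntegral_succ hD ht

end

section

variable {φ ψ : ℝ → ℝ} {ω : ℝ} {k : ℕ}

lemma tendsto_integral_pow_mul_deriv_div_pow_succ (hφ : ∀ s, HasDerivAt φ (ψ s) s)
    (hψ : Continuous ψ) (hφω : Tendsto (fun t => φ t / t) atTop (𝓝 ω)) :
    Tendsto (fun t => (∫ s in 0..t, s ^ k * ψ s) / t ^ (k + 1)) atTop (𝓝 (ω / (k + 1))) := by
  have hparts : ∀ t, ∫ s in 0..t, s ^ k * ψ s =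
      t ^ k * φ t - 0 ^ k * φ 0 - ∫ s in 0..t, (k * s ^ (k - 1)) * φ s := fun t =>
    intervalIntegral.integral_mul_deriv_eq_deriv_mul (fun s _ => hasDerivAt_pow k s)
      (fun s _ => hφ s) (Continuous.intervalIntegrable (by fun_prop) _ _)
      (hψ.intervalIntegrable _ _)
  have hboundary : Tendsto (fun t => t ^ k * φ t / t ^ (k + 1)) atTop (𝓝 ω) := by
    refine hφω.congr' ?_
    filter_upwards [eventually_gt_atTop 0] with t ht
    field_simp
    ring
  have hinitial : Tendsto (fun t => 0 ^ k * φ 0 / t ^ (k + 1)) atTop (𝓝 0) :=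
    tendsto_const_nhds.div_atTop (tendsto_pow_atTop k.succ_ne_zero)
  have hφc : Continuous φ := continuous_iff_continuousAt.2 fun s => (hφ s).continuousAt
  have hbulk : Tendsto (fun t => (∫ s in 0..t, (k * s ^ (k - 1)) * φ s) / t ^ (k + 1)) atTop
      (𝓝 (k * ω / (k + 1))) := by
    refine tendsto_integral_div_pow_succ (by fun_prop) ((hφω.const_mul (k : ℝ)).congr' ?_)
    filter_upwards [eventually_gt_atTop 0] with s hs
    rcases k with _ | k
    · simp
    · simp only [Nat.add_sub_cancel, pow_succ]
      field_simp
  have hk : (k : ℝ) + 1 ≠ 0 := by positivity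
  convert (hboundary.sub hinitial).sub hbulk using 1
  · ext t
    rw [hparts, sub_div, sub_div]
  · congr 1
    field_simp
    ring

lemma tendsto_integral_mul_div_pow_succ_of_tendsto_zero {e : ℝ → ℝ} {M : ℝ}
    (hψM : ∀ s ≥ 0, |ψ s| ≤ M) (he : ContinuousOn e (Ici 0))
    (he0 : Tendsto (fun s => e s / s ^ k) atTop (𝓝 0)) :
    Tendsto (fun t => (∫ s in 0..t, ψ s * e s) / t ^ (k + 1)) atTop (𝓝 0) := by
  have hMe : ContinuousOn (fun s => M * |e s|) (Ici 0) := continuousOn_const.mul he.abs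
  have hmajorant : Tendsto (fun t => (∫ s in 0..t, M * |e s|) / t ^ (k + 1)) atTop (𝓝 0) := by
    have hMe0 : Tendsto (fun s => M * |e s| / s ^ k) atTop (𝓝 0) := by
      have h := he0.abs.const_mul M
      rw [abs_zero, mul_zero] at h
      refine h.congr' ?_
      filter_upwards [eventually_gt_atTop 0] with s hs
      rw [abs_div, abs_of_pos (pow_pos hs k), mul_div_assoc]
    simpa using tendsto_integral_div_pow_succ hMe hMe0
  refine squeeze_zero_norm' ?_ hmajorant
  filter_upwards [eventually_gt_atTop 0] with t ht
  rw [norm_div, Real.norm_of_nonneg (pow_pos ht _).le]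
  gcongr
  refine intervalIntegral.norm_integral_le_of_norm_le ht.le (ae_of_all _ fun s hs => ?_)
    ((hMe.mono ?_).intervalIntegrable)
  · rw [norm_mul, Real.norm_eq_abs, Real.norm_eq_abs]
    exact mul_le_mul_of_nonneg_right (hψM s hs.1.le) (abs_nonneg _)
  · rw [uIcc_of_le ht.le]
    exact Icc_subset_Ici_self

lemma tendsto_integral_mul_div_pow_succ {g : ℝ → ℝ} {c M : ℝ}
    (hφ : ∀ s, HasDerivAt φ (ψ s) s) (hψ : Continuous ψ) (hψM : ∀ s ≥ 0, |ψ s| ≤ M)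
    (hφω : Tendsto (fun t => φ t / t) atTop (𝓝 ω))
    (hg : ContinuousOn g (Ici 0)) (hgc : Tendsto (fun s => g s / s ^ k) atTop (𝓝 c)) :
    Tendsto (fun t => (∫ s in 0..t, ψ s * g s) / t ^ (k + 1)) atTop (𝓝 (c * ω / (k + 1))) := by
  set e := fun s => g s - c * s ^ k
  have he : ContinuousOn e (Ici 0) := hg.sub (by fun_prop)
  have he0 : Tendsto (fun s => e s / s ^ k) atTop (𝓝 0) := by
    refine sub_self c ▸ (hgc.sub_const c).congr' ?_
    filter_upwards [eventually_gt_atTop 0] with s hs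
    simp only [e, sub_div, mul_div_cancel_right₀ _ (pow_pos hs k).ne']
  have hlim :=
    ((tendsto_integral_pow_mul_deriv_div_pow_succ (k := k) hφ hψ hφω).const_mul c).add
      (tendsto_integral_mul_div_pow_succ_of_tendsto_zero hψM he he0)
  rw [add_zero, ← mul_div_assoc] at hlim
  refine hlim.congr' ?_
  filter_upwards [eventually_ge_atTop 0] with t ht
  have hsplit : ∀ s, ψ s * g s = c * (s ^ k * ψ s) + ψ s * e s := fun s => by ring
  rw [← mul_div_assoc, ← add_div, ← intervalIntegral.integral_const_mul,
    ← intervalIntegral.integral_add]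
  · simp only [hsplit]
  · exact Continuous.intervalIntegrable (by fun_prop) _ _
  · refine ContinuousOn.intervalIntegrable (hψ.continuousOn.mul (he.mono ?_))
    rw [uIcc_of_le ht]
    exact Icc_subset_Ici_self

end

theorem tendsto_simplexIntegral_deriv_div_pow {k : ℕ} {φ : Fin k → ℝ → ℝ} {ω : Fin k → ℝ}
    (hφ : ∀ i, ContDiff ℝ 1 (φ i)) (hbdd : ∀ i, ∃ M, ∀ s ≥ 0, |deriv (φ i) s| ≤ M)
    (hω : ∀ i, Tendsto (fun t => φ i t / t) atTop (𝓝 (ω i))) :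
    Tendsto (fun t => simplexIntegral (fun i => deriv (φ i)) t / t ^ k) atTop
      (𝓝 ((∏ i, ω i) / k.factorial)) := by
  induction k with
  | zero => simp [simplexIntegral_zero]
  | succ k ih =>
    have hD : ∀ i, Continuous (deriv (φ i)) := fun i => (hφ i).continuous_deriv le_rfl
    obtain ⟨M, hM⟩ := hbdd (Fin.last k)
    have hstep := tendsto_integral_mul_div_pow_succ
      (fun s => ((hφ (Fin.last k)).differentiable one_ne_zero s).hasDerivAt) (hD _) hM
      (hω _) (continuousOn_simplexIntegral fun j => hD j.castSucc)
      (ih (fun j => hφ j.castSucc) (fun j => hbdd j.castSucc) fun j => hω j.castSucc)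
    convert hstep.congr' _ using 2
    · rw [Fin.prod_univ_castSucc, Nat.factorial_succ]
      push_cast
      field_simp
    · filter_upwards [eventually_ge_atTop 0] with t ht
      rw [simplexIntegral_succ hD ht]

/-- Asymptotics of the `k`-fold simplex integral of a product of derivatives:
`m_k(t)/t^k → (ω₁⋯ω_k)/k!`. -/
theorem simplex_iterated_integral_asymptotics (k : ℕ)
    (φ : Fin k → ℝ → ℝ) (ω : Fin k → ℝ)
    (hC1 : ∀ i, ContDiff ℝ 1 (φ i))
    (hbdd : ∀ i, ∃ M, ∀ s ≥ (1:ℝ), |deriv (φ i) s| ≤ M)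
    (hasymp : ∀ i, Tendsto (fun t => φ i t / t) atTop (nhds (ω i))) :
    Tendsto (fun t : ℝ =>
        (∫ p in {p : Fin k → ℝ |
            (∀ i, 0 ≤ p i ∧ p i ≤ t) ∧ ∀ i j : Fin k, i ≤ j → p i ≤ p j},
          ∏ i, deriv (φ i) (p i)) / t ^ k)
      atTop (nhds ((∏ i, ω i) / Nat.factorial k)) :=
  tendsto_simplexIntegral_deriv_div_pow hC1
    (fun i => ((hC1 i).continuous_deriv le_rfl).exists_abs_le_Ici_of_exists_abs_le_Ici (hbdd i) 0)
    hasymp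
end
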